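/- arXiv:1608.02219 — 3 statements merged into one kernel-verified Lean document; each statement's English description precedes it below -/
import Mathlib

section
/- Constancy of the Wronskian (determinant of the transfer matrix equals 1): Let (a, μ) ∈ AM(ℝ) (with respect to some nonzero nonnegative periodic Borel measure ρ with ‖ρ‖_unif < ∞), let s ∈ ℝ, and let (uN, vN) and (uD, vD) be solutions of H_{a,μ} w = 0 with uN(s) = 1, vN(s) = 0, uD(s) = 0, vD(s) = 1. Then uN(t)·vD(t) − uD(t)·vN(t) = 1 for all t ∈ ℝ. -/
/-
The Wronskian is constant by the product rule: on `(c, d]` the increment of `u₁ v₂` is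
`∫ v₁ v₂ / a + ∫ u₁ u₂ dμ`, which is symmetric in the two solutions. The product rule itself is
Fubini on the two halves of `(c, d]²`.

It needs `v / a` to be locally integrable, which the integral equation for `u` does not give for
free (a non-integrable integrand has integral `0`). On an interval `Ι c r` with
`|r - c| · |μ|(Ι c r) ≤ m / 2`, where `m = inf a`, a contraction estimate bounds `u` wherever its
integral equation is genuine, and `u = u 0` elsewhere; so `v` is bounded there. Hence the set of
`x` with `v / a` integrable on `[0, x]` is open and closed in `ℝ`.
-/

open MeasureTheory Set Filter

noncomputable section

/-- A nonnegative Borel measure on `ℝ` is finite on bounded sets. -/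
def FiniteOnBounded (ν : MeasureTheory.Measure ℝ) : Prop :=
  ∀ s : Set ℝ, Bornology.IsBounded s → ν s < ⊤

/-- `⨆ t, ν ((t, t+1])` in `ℝ≥0∞`. -/
def unifE (ν : MeasureTheory.Measure ℝ) : ENNReal := ⨆ t : ℝ, ν (Set.Ioc t (t + 1))

/-- The uniform norm `‖ν‖_unif` as a real number. -/
def unifNorm (ν : MeasureTheory.Measure ℝ) : ℝ := (unifE ν).toReal

/-- Signed value of the real local measure `μ = (μp, μm)` on a set `B`. -/
def lmVal (μp μm : MeasureTheory.Measure ℝ) (B : Set ℝ) : ℝ := (μp B).toReal - (μm B).toReal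

/-- Signed integral `∫ f dμ` w.r.t. the real local measure `μ = (μp, μm)`. -/
def lmInt (μp μm : MeasureTheory.Measure ℝ) (f : ℝ → ℝ) : ℝ := (∫ x, f x ∂μp) - (∫ x, f x ∂μm)

/-- The (topological) support of a measure on `ℝ`. -/
def measSupport (ρ : MeasureTheory.Measure ℝ) : Set ℝ :=
  {x : ℝ | ∀ ε : ℝ, 0 < ε → 0 < ρ (Set.Ioo (x - ε) (x + ε))}

/-- `p` is a period of `ρ`, i.e. `p ≠ 0` and `ρ (B + p) = ρ B` for all `B`
(note `B + p = (· - p) ⁻¹' B`). -/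
def IsPeriod (ρ : MeasureTheory.Measure ℝ) (p : ℝ) : Prop :=
  p ≠ 0 ∧ ∀ B : Set ℝ, ρ ((fun x => x - p) ⁻¹' B) = ρ B

/-- Supremum norm of a (bounded) function. -/
def supNorm (a : ℝ → ℝ) : ℝ := sSup (Set.range a)

/-- The class `AM(ℝ)`: `a` Borel measurable with `0 < inf a` and `sup a < ∞`, and
`μ = (μp, μm)` a real local measure with `‖μ‖_unif < ∞` and `|μ|(ℝ ∖ supp ρ) = 0`. -/
structure AM (ρ : MeasureTheory.Measure ℝ) (a : ℝ → ℝ)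
    (μp μm : MeasureTheory.Measure ℝ) : Prop where
  meas_a : Measurable a
  inf_pos : 0 < ⨅ x : ℝ, a x
  bddAbove : BddAbove (Set.range a)
  finp : FiniteOnBounded μp
  finm : FiniteOnBounded μm
  unif_lt_top : unifE (μp + μm) < ⊤
  supp_sub : (μp + μm) ((measSupport ρ)ᶜ) = 0

/-- `(u, v)` is a solution of `H_{a,μ} u = z u` with weight `ρ`
(`v` playing the role of `a·u'`). -/
structure IsSolution (a : ℝ → ℝ) (μp μm ρ : MeasureTheory.Measure ℝ) (z : ℝ)
    (u v : ℝ → ℝ) : Prop where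
  meas_u : Measurable u
  meas_v : Measurable v
  eq_u : ∀ t : ℝ, u t = u 0 + ∫ s in (0:ℝ)..t, v s / a s
  eq_v : ∀ s t : ℝ, s ≤ t →
    v t - v s = ((∫ x in Set.Ioc s t, u x ∂μp) - (∫ x in Set.Ioc s t, u x ∂μm))
      - z * ∫ x in Set.Ioc s t, u x ∂ρ

/-- `(u, v)` is a solution of `H_{a,μ} u = 0`. -/
structure IsSolution0 (a : ℝ → ℝ) (μp μm : MeasureTheory.Measure ℝ)
    (u v : ℝ → ℝ) : Prop where
  meas_u : Measurable u
  meas_v : Measurable v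
  eq_u : ∀ t : ℝ, u t = u 0 + ∫ s in (0:ℝ)..t, v s / a s
  eq_v : ∀ s t : ℝ, s ≤ t →
    v t - v s = (∫ x in Set.Ioc s t, u x ∂μp) - (∫ x in Set.Ioc s t, u x ∂μm)

/-- Wasserstein-type seminorm `‖μ − ν‖_I` of the difference of two real local measures. -/
def wNorm (μp μm νp νm : MeasureTheory.Measure ℝ) (I : Set ℝ) : ℝ :=
  sSup {r : ℝ | ∃ w : ℝ → ℝ, LipschitzWith 1 w ∧ HasCompactSupport w ∧
    tsupport w ⊆ I ∧ Metric.diam (tsupport w) ≤ 2 ∧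
    r = |lmInt μp μm w - lmInt νp νm w|}

/-- Translate of a measure: `(lmTranslate ν p) B = ν (B + p)`. -/
def lmTranslate (ν : MeasureTheory.Measure ℝ) (p : ℝ) : MeasureTheory.Measure ℝ :=
  MeasureTheory.Measure.map (fun x => x - p) ν

/-- The primitive `φ_μ` of a real local measure `μ = (μp, μm)`. -/
def phiLM (μp μm : MeasureTheory.Measure ℝ) (t : ℝ) : ℝ :=
  if 0 ≤ t then lmVal μp μm (Set.Ioc 0 t) else -(lmVal μp μm (Set.Ioc t 0))


open scoped Interval Topology

lemma Set.uIoc_subset_uIoc_of_mem {α : Type*} [LinearOrder α] {a b x : α} (hx : x ∈ Ι a b) :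
    Ι a x ⊆ Ι a b :=
  uIoc_subset_uIoc_of_uIcc_subset_uIcc (uIcc_subset_uIcc_left (uIoc_subset_uIcc hx))

lemma abs_div_le_abs_div_of_le {m b x : ℝ} (hm : 0 < m) (hb : m ≤ b) : |x / b| ≤ |x| / m := by
  rw [abs_div, abs_of_pos (hm.trans_le hb)]
  exact div_le_div_of_nonneg_left (abs_nonneg x) hm hb

lemma measureReal_add_measureReal_mono {μ ν : Measure ℝ} [IsFiniteMeasureOnCompacts μ]
    [IsFiniteMeasureOnCompacts ν] {s t : Set ℝ} (hst : s ⊆ t) (ht : Bornology.IsBounded t) :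
    μ.real s + ν.real s ≤ μ.real t + ν.real t :=
  add_le_add (measureReal_mono hst ht.measure_lt_top.ne) (measureReal_mono hst ht.measure_lt_top.ne)

lemma FiniteOnBounded.isFiniteMeasureOnCompacts {ν : Measure ℝ} (h : FiniteOnBounded ν) :
    IsFiniteMeasureOnCompacts ν :=
  ⟨fun _ hK => h _ hK.isBounded⟩

lemma AM.iInf_le {ρ : Measure ℝ} {a : ℝ → ℝ} {μp μm : Measure ℝ} (h : AM ρ a μp μm) (x : ℝ) :
    ⨅ y, a y ≤ a x := by
  refine ciInf_le ?_ x
  by_contra hbdd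
  exact h.inf_pos.ne' (Real.iInf_of_not_bddBelow hbdd)

section IntegrationByParts

variable {ν : Measure ℝ} {g w : ℝ → ℝ} {c d : ℝ}

lemma integral_indicator_snd_le_fst {y : ℝ} (hy : y ∈ Ioc c d) :
    ∫ x, {p : ℝ × ℝ | p.2 ≤ p.1}.indicator (fun p => g p.1 * w p.2) (y, x) ∂ν.restrict (Ioc c d)
      = g y * ∫ x in Ioc c y, w x ∂ν := by
  have hset : Iic y ∩ Ioc c d = Ioc c y := by
    ext x; simp only [mem_inter_iff, mem_Iic, mem_Ioc]
    constructor
    · rintro ⟨hxy, hcx, -⟩; exact ⟨hcx, hxy⟩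
    · rintro ⟨hcx, hxy⟩; exact ⟨hxy, hcx, hxy.trans hy.2⟩
  change ∫ x, (Iic y).indicator (fun x => g y * w x) x ∂ν.restrict (Ioc c d) = _
  rw [integral_indicator measurableSet_Iic, Measure.restrict_restrict measurableSet_Iic, hset,
    integral_const_mul]

lemma integral_indicator_fst_lt_snd {x : ℝ} (hx : x ∈ Ioc c d) :
    ∫ y, {p : ℝ × ℝ | p.2 ≤ p.1}ᶜ.indicator (fun p => g p.1 * w p.2) (y, x)
        ∂volume.restrict (Ioc c d)
      = (∫ y in Ioc c x, g y) * w x := by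
  have hset : Iio x ∩ Ioc c d = Ioo c x := by
    ext y; simp only [mem_inter_iff, mem_Iio, mem_Ioc, mem_Ioo]
    constructor
    · rintro ⟨hyx, hcy, -⟩; exact ⟨hcy, hyx⟩
    · rintro ⟨hcy, hyx⟩; exact ⟨hyx, hcy, hyx.le.trans hx.2⟩
  have hcompl : {p : ℝ × ℝ | p.2 ≤ p.1}ᶜ = {p | p.1 < p.2} := by ext; simp
  rw [hcompl]
  change ∫ y, (Iio x).indicator (fun y => g y * w x) y ∂volume.restrict (Ioc c d) = _
  rw [integral_indicator measurableSet_Iio, Measure.restrict_restrict measurableSet_Iio, hset,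
    integral_mul_const, integral_Ioc_eq_integral_Ioo]

lemma integrableOn_mul_setIntegral_Ioc [SFinite ν] (hg : IntegrableOn g (Ioc c d))
    (hw : IntegrableOn w (Ioc c d) ν) :
    IntegrableOn (fun y => g y * ∫ x in Ioc c y, w x ∂ν) (Ioc c d) := by
  have hS : MeasurableSet {p : ℝ × ℝ | p.2 ≤ p.1} := measurableSet_le measurable_snd measurable_fst
  refine ((hg.mul_prod hw).indicator hS).integral_prod_left.congr ?_
  exact ae_restrict_of_forall_mem measurableSet_Ioc fun y hy => integral_indicator_snd_le_fst hy

theorem setIntegral_mul_setIntegral_Ioc [SFinite ν] (hg : IntegrableOn g (Ioc c d))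
    (hw : IntegrableOn w (Ioc c d) ν) :
    (∫ y in Ioc c d, g y) * (∫ x in Ioc c d, w x ∂ν)
      = (∫ y in Ioc c d, g y * ∫ x in Ioc c y, w x ∂ν)
        + ∫ x in Ioc c d, (∫ y in Ioc c x, g y) * w x ∂ν := by
  set S := {p : ℝ × ℝ | p.2 ≤ p.1}
  set F : ℝ × ℝ → ℝ := fun p => g p.1 * w p.2
  have hS : MeasurableSet S := measurableSet_le measurable_snd measurable_fst
  have hF : Integrable F ((volume.restrict (Ioc c d)).prod (ν.restrict (Ioc c d))) :=
    hg.mul_prod hw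
  have hsplit : ∫ p, F p ∂(volume.restrict (Ioc c d)).prod (ν.restrict (Ioc c d))
      = (∫ p, S.indicator F p ∂(volume.restrict (Ioc c d)).prod (ν.restrict (Ioc c d)))
        + ∫ p, Sᶜ.indicator F p ∂(volume.restrict (Ioc c d)).prod (ν.restrict (Ioc c d)) := by
    rw [← integral_add (hF.indicator hS) (hF.indicator hS.compl)]
    simp only [indicator_self_add_compl_apply]
  rw [← integral_prod_mul, hsplit, integral_prod _ (hF.indicator hS),
    integral_prod_symm _ (hF.indicator hS.compl)]
  congr 1
  · exact setIntegral_congr_fun measurableSet_Ioc fun y hy => integral_indicator_snd_le_fst hy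
  · exact setIntegral_congr_fun measurableSet_Ioc fun x hx => integral_indicator_fst_lt_snd hx

end IntegrationByParts

namespace IsSolution0

variable {a : ℝ → ℝ} {μp μm : Measure ℝ} {u v : ℝ → ℝ} {m : ℝ}

lemma abs_v_sub_le [IsFiniteMeasureOnCompacts μp] [IsFiniteMeasureOnCompacts μm]
    (h : IsSolution0 a μp μm u v) {c x B : ℝ} (hB : ∀ y ∈ Ι c x, |u y| ≤ B) :
    |v x - v c| ≤ B * (μp.real (Ι c x) + μm.real (Ι c x)) := by
  wlog hcx : c ≤ x generalizing c x
  · rw [abs_sub_comm, uIoc_comm]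
    exact this (by rwa [uIoc_comm]) (le_of_not_ge hcx)
  rw [uIoc_of_le hcx] at hB ⊢
  have hμp : |∫ y in Ioc c x, u y ∂μp| ≤ B * μp.real (Ioc c x) :=
    norm_setIntegral_le_of_norm_le_const (f := u) (μ := μp) measure_Ioc_lt_top hB
  have hμm : |∫ y in Ioc c x, u y ∂μm| ≤ B * μm.real (Ioc c x) :=
    norm_setIntegral_le_of_norm_le_const (f := u) (μ := μm) measure_Ioc_lt_top hB
  rw [h.eq_v c x hcx, mul_add]
  exact (abs_sub _ _).trans (add_le_add hμp hμm)

lemma u_eq_of_not_intervalIntegrable (h : IsSolution0 a μp μm u v) {x : ℝ}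
    (hx : ¬ IntervalIntegrable (fun y => v y / a y) volume 0 x) : u x = u 0 := by
  simpa [intervalIntegral.integral_undef hx] using h.eq_u x

lemma u_sub_eq_integral (h : IsSolution0 a μp μm u v) {c x : ℝ}
    (hc : IntervalIntegrable (fun y => v y / a y) volume 0 c)
    (hx : IntervalIntegrable (fun y => v y / a y) volume 0 x) :
    u x - u c = ∫ y in c..x, v y / a y := by
  rw [h.eq_u x, h.eq_u c, ← intervalIntegral.integral_interval_sub_left hx hc]
  ring

lemma abs_u_sub_le (h : IsSolution0 a μp μm u v) {c x : ℝ}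
    (hc : IntervalIntegrable (fun y => v y / a y) volume 0 c)
    (hx : IntervalIntegrable (fun y => v y / a y) volume 0 x) :
    |u x - u c| ≤ ∫ y in Ι c x, |v y / a y| := by
  rw [h.u_sub_eq_integral hc hx]
  exact intervalIntegral.norm_integral_le_integral_norm_uIoc (f := fun y => v y / a y)

/-- With `F = ∫_{Ι c x} |v / a|`, `u` is bounded by `|u c| + F` on `Ι c x`, hence `|v / a|` by
`(|v c| + (|u c| + F) K) / m`; integrating, the shortness of the interval gives `F ≤ … + F / 2`. -/
lemma abs_u_le_of_short [IsFiniteMeasureOnCompacts μp] [IsFiniteMeasureOnCompacts μm]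
    (h : IsSolution0 a μp μm u v) (hm : 0 < m) (ham : ∀ x, m ≤ a x) {c r x : ℝ}
    (hshort : |r - c| * (μp.real (Ι c r) + μm.real (Ι c r)) ≤ m / 2)
    (hc : IntervalIntegrable (fun y => v y / a y) volume 0 c)
    (hx : IntervalIntegrable (fun y => v y / a y) volume 0 x) (hxr : x ∈ Ι c r) :
    |u x| ≤ 2 * (|u c| + |r - c| * |v c| / m) := by
  set K := μp.real (Ι c r) + μm.real (Ι c r)
  set F := ∫ y in Ι c x, |v y / a y|
  have hint : IntegrableOn (fun y => v y / a y) (Ι c x) :=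
    intervalIntegrable_iff.1 (hc.symm.trans hx)
  have hF0 : 0 ≤ F := setIntegral_nonneg measurableSet_uIoc fun _ _ => abs_nonneg _
  have hu : ∀ z ∈ Ι c x, |u z| ≤ |u c| + F := by
    intro z hz
    have hsub := uIoc_subset_uIoc_of_mem hz
    have hz' := hc.trans (intervalIntegrable_iff.2 (hint.mono_set hsub))
    have hmono : ∫ y in Ι c z, |v y / a y| ≤ F :=
      setIntegral_mono_set hint.abs (Eventually.of_forall fun _ => abs_nonneg _)
        hsub.eventuallyLE
    linarith [abs_sub_abs_le_abs_sub (u z) (u c), h.abs_u_sub_le hc hz']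
  have hva : ∀ y ∈ Ι c x, |v y / a y| ≤ (|v c| + (|u c| + F) * K) / m := by
    intro y hy
    have hsub := (uIoc_subset_uIoc_of_mem hy).trans (uIoc_subset_uIoc_of_mem hxr)
    have hK : μp.real (Ι c y) + μm.real (Ι c y) ≤ K :=
      measureReal_add_measureReal_mono hsub (Metric.isBounded_Ioc _ _)
    have hv := h.abs_v_sub_le fun z hz => hu z (uIoc_subset_uIoc_of_mem hy hz)
    refine (abs_div_le_abs_div_of_le hm (ham y)).trans (div_le_div_of_nonneg_right ?_ hm.le)
    nlinarith [abs_sub_abs_le_abs_sub (v y) (v c), abs_nonneg (u c)]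
  have hFle : F ≤ (|v c| + (|u c| + F) * K) / m * |r - c| := by
    have := norm_setIntegral_le_of_norm_le_const (f := fun y => |v y / a y|) (s := Ι c x)
      (μ := volume) measure_Ioc_lt_top fun y hy => (abs_abs (v y / a y)).trans_le (hva y hy)
    rw [Measure.real, Real.volume_uIoc, ENNReal.toReal_ofReal (abs_nonneg _)] at this
    refine (le_abs_self F).trans (this.trans (mul_le_mul_of_nonneg_left ?_ ?_))
    · exact abs_sub_left_of_mem_uIcc (uIoc_subset_uIcc hxr)
    · positivity
  have hK : |r - c| * K / m ≤ 1 / 2 := by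
    rw [div_le_iff₀ hm]; linarith
  have hFbound : F ≤ |u c| + 2 * (|r - c| * |v c| / m) := by
    have hexp : (|v c| + (|u c| + F) * K) / m * |r - c|
        = |r - c| * |v c| / m + (|u c| + F) * (|r - c| * K / m) := by ring
    nlinarith [abs_nonneg (u c)]
  linarith [abs_sub_abs_le_abs_sub (u x) (u c), h.abs_u_sub_le hc hx]

lemma intervalIntegrable_of_short [IsFiniteMeasureOnCompacts μp] [IsFiniteMeasureOnCompacts μm]
    (h : IsSolution0 a μp μm u v) (hm : 0 < m) (ham : ∀ x, m ≤ a x) (hma : Measurable a)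
    {c r : ℝ} (hshort : |r - c| * (μp.real (Ι c r) + μm.real (Ι c r)) ≤ m / 2)
    (hc : IntervalIntegrable (fun y => v y / a y) volume 0 c) :
    IntervalIntegrable (fun y => v y / a y) volume 0 r := by
  set K := μp.real (Ι c r) + μm.real (Ι c r)
  set U := max |u 0| (2 * (|u c| + |r - c| * |v c| / m))
  -- where `v / a` is not integrable on `[0, x]`, the integral in `h.eq_u x` is the junk value `0`
  have hu : ∀ x ∈ Ι c r, |u x| ≤ U := by
    intro x hx
    by_cases hx' : IntervalIntegrable (fun y => v y / a y) volume 0 x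
    · exact le_max_of_le_right (h.abs_u_le_of_short hm ham hshort hc hx' hx)
    · rw [h.u_eq_of_not_intervalIntegrable hx']
      exact le_max_left _ _
  have hva : ∀ y ∈ Ι c r, ‖v y / a y‖ ≤ (|v c| + U * K) / m := by
    intro y hy
    have hsub := uIoc_subset_uIoc_of_mem hy
    have hK : μp.real (Ι c y) + μm.real (Ι c y) ≤ K :=
      measureReal_add_measureReal_mono hsub (Metric.isBounded_Ioc _ _)
    have hv := h.abs_v_sub_le fun z hz => hu z (hsub hz)
    have hU : 0 ≤ U := (abs_nonneg _).trans (le_max_left _ _)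
    refine (abs_div_le_abs_div_of_le hm (ham y)).trans (div_le_div_of_nonneg_right ?_ hm.le)
    nlinarith [abs_sub_abs_le_abs_sub (v y) (v c)]
  have hint : IntegrableOn (fun y => v y / a y) (Ι c r) :=
    Measure.integrableOn_of_bounded (by simp [Real.volume_uIoc])
      (h.meas_v.div hma).aestronglyMeasurable (ae_restrict_of_forall_mem measurableSet_uIoc hva)
  exact hc.trans (intervalIntegrable_iff.2 hint)

lemma eventually_intervalIntegrable_iff [IsFiniteMeasureOnCompacts μp]
    [IsFiniteMeasureOnCompacts μm] (h : IsSolution0 a μp μm u v) (hm : 0 < m)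
    (ham : ∀ x, m ≤ a x) (hma : Measurable a) (x : ℝ) :
    ∀ᶠ y in 𝓝 x, (IntervalIntegrable (fun y => v y / a y) volume 0 y ↔
      IntervalIntegrable (fun y => v y / a y) volume 0 x) := by
  set K := μp.real (Icc (x - 1) (x + 1)) + μm.real (Icc (x - 1) (x + 1))
  have hnear : ∀ᶠ y in 𝓝 x, y ∈ Icc (x - 1) (x + 1) := Icc_mem_nhds (by linarith) (by linarith)
  have hsmall : ∀ᶠ y in 𝓝 x, |y - x| * K < m / 2 := by
    have hcont : Continuous fun y => |y - x| * K := by fun_prop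
    refine hcont.tendsto x |>.eventually (gt_mem_nhds ?_)
    simpa using half_pos hm
  filter_upwards [hnear, hsmall] with y hy hyK
  have hsub : Ι x y ⊆ Icc (x - 1) (x + 1) :=
    uIoc_subset_uIcc.trans (uIcc_subset_Icc ⟨by linarith, by linarith⟩ hy)
  have hshort : |y - x| * (μp.real (Ι x y) + μm.real (Ι x y)) ≤ m / 2 := by
    refine le_trans (mul_le_mul_of_nonneg_left ?_ (abs_nonneg _)) hyK.le
    exact measureReal_add_measureReal_mono hsub (Metric.isBounded_Icc _ _)
  refine ⟨h.intervalIntegrable_of_short hm ham hma ?_,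
    h.intervalIntegrable_of_short hm ham hma hshort⟩
  rwa [abs_sub_comm, uIoc_comm]

theorem intervalIntegrable [IsFiniteMeasureOnCompacts μp] [IsFiniteMeasureOnCompacts μm]
    (h : IsSolution0 a μp μm u v) (hm : 0 < m) (ham : ∀ x, m ≤ a x) (hma : Measurable a)
    (x y : ℝ) : IntervalIntegrable (fun y => v y / a y) volume x y := by
  have hconst : IsLocallyConstant fun x => IntervalIntegrable (fun y => v y / a y) volume 0 x :=
    (IsLocallyConstant.iff_eventually_eq _).2 fun x =>
      (h.eventually_intervalIntegrable_iff hm ham hma x).mono fun _ hy => propext hy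
  have hall : ∀ x, IntervalIntegrable (fun y => v y / a y) volume 0 x := fun x =>
    (hconst.apply_eq_of_preconnectedSpace 0 x).mp IntervalIntegrable.refl
  exact (hall x).symm.trans (hall y)

section Regular

variable [IsFiniteMeasureOnCompacts μp] [IsFiniteMeasureOnCompacts μm]
  (hm : 0 < m) (ham : ∀ x, m ≤ a x) (hma : Measurable a)
include hm ham hma

lemma u_eq_add_integral (h : IsSolution0 a μp μm u v) (c x : ℝ) :
    u x = u c + ∫ y in c..x, v y / a y := by
  linarith [h.u_sub_eq_integral (h.intervalIntegrable hm ham hma 0 c)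
    (h.intervalIntegrable hm ham hma 0 x)]

lemma continuous_u (h : IsSolution0 a μp μm u v) : Continuous u := by
  rw [show u = fun x => u 0 + ∫ y in (0 : ℝ)..x, v y / a y from funext h.eq_u]
  exact continuous_const.add
    (intervalIntegral.continuous_primitive (h.intervalIntegrable hm ham hma) 0)

theorem mul_sub_mul_eq {u₁ v₁ u₂ v₂ : ℝ → ℝ} (h₁ : IsSolution0 a μp μm u₁ v₁)
    (h₂ : IsSolution0 a μp μm u₂ v₂) {c d : ℝ} (hcd : c ≤ d) :
    u₁ d * v₂ d - u₁ c * v₂ c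
      = (∫ y in Ioc c d, v₁ y / a y * v₂ y)
        + ((∫ x in Ioc c d, u₁ x * u₂ x ∂μp) - ∫ x in Ioc c d, u₁ x * u₂ x ∂μm) := by
  set g := fun y => v₁ y / a y
  set G := fun x => ∫ y in Ioc c x, g y
  have hg : IntegrableOn g (Ioc c d) := (h₁.intervalIntegrable hm ham hma c d).1
  have hu₁ : ∀ x, c ≤ x → u₁ x = u₁ c + G x := fun x hcx => by
    rw [h₁.u_eq_add_integral hm ham hma c x, intervalIntegral.integral_of_le hcx]
  have hcont₁ := h₁.continuous_u hm ham hma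
  have hcont₂ := h₂.continuous_u hm ham hma
  have hp : IntegrableOn (fun y => g y * ∫ x in Ioc c y, u₂ x ∂μp) (Ioc c d) :=
    integrableOn_mul_setIntegral_Ioc hg hcont₂.integrableOn_Ioc
  have hn : IntegrableOn (fun y => g y * ∫ x in Ioc c y, u₂ x ∂μm) (Ioc c d) :=
    integrableOn_mul_setIntegral_Ioc hg hcont₂.integrableOn_Ioc
  have hLeb : ∫ y in Ioc c d, g y * v₂ y
      = v₂ c * (∫ y in Ioc c d, g y)
        + ((∫ y in Ioc c d, g y * ∫ x in Ioc c y, u₂ x ∂μp)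
          - ∫ y in Ioc c d, g y * ∫ x in Ioc c y, u₂ x ∂μm) := by
    rw [← integral_const_mul, ← integral_sub hp hn, ← integral_add (hg.const_mul _) ?_]
    · refine setIntegral_congr_fun measurableSet_Ioc fun y hy => ?_
      linear_combination g y * h₂.eq_v c y hy.1.le
    · exact hp.sub hn
  have hMeas : ∀ (ν : Measure ℝ) [IsFiniteMeasureOnCompacts ν],
      ∫ x in Ioc c d, u₁ x * u₂ x ∂ν
        = u₁ c * (∫ x in Ioc c d, u₂ x ∂ν) + ∫ x in Ioc c d, G x * u₂ x ∂ν := by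
    intro ν _
    have hGu : ∫ x in Ioc c d, G x * u₂ x ∂ν = ∫ x in Ioc c d, (u₁ x * u₂ x - u₁ c * u₂ x) ∂ν :=
      setIntegral_congr_fun measurableSet_Ioc fun x hx => by rw [hu₁ x hx.1.le]; ring
    rw [hGu, integral_sub (by fun_prop : Continuous fun x => u₁ x * u₂ x).integrableOn_Ioc
      (hcont₂.integrableOn_Ioc.const_mul _), integral_const_mul]
    ring
  have hibp := setIntegral_mul_setIntegral_Ioc (ν := μp) hg hcont₂.integrableOn_Ioc
  have hibn := setIntegral_mul_setIntegral_Ioc (ν := μm) hg hcont₂.integrableOn_Ioc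
  rw [hLeb, hMeas μp, hMeas μm]
  linear_combination v₂ d * hu₁ d hcd + (u₁ c + G d) * h₂.eq_v c d hcd + hibp - hibn

theorem wronskian_eq {u₁ v₁ u₂ v₂ : ℝ → ℝ} (h₁ : IsSolution0 a μp μm u₁ v₁)
    (h₂ : IsSolution0 a μp μm u₂ v₂) (c d : ℝ) :
    u₁ d * v₂ d - u₂ d * v₁ d = u₁ c * v₂ c - u₂ c * v₁ c := by
  wlog hcd : c ≤ d generalizing c d
  · exact (this d c (le_of_not_ge hcd)).symm
  have e₁ := h₁.mul_sub_mul_eq hm ham hma h₂ hcd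
  have e₂ := h₂.mul_sub_mul_eq hm ham hma h₁ hcd
  have hLeb : ∫ y in Ioc c d, v₂ y / a y * v₁ y = ∫ y in Ioc c d, v₁ y / a y * v₂ y := by
    congr 1; ext y; ring
  simp_rw [mul_comm (u₂ _) (u₁ _)] at e₂
  linarith

end Regular

end IsSolution0

theorem wronskian_eq_one_general
    (ρ : MeasureTheory.Measure ℝ)
    (a : ℝ → ℝ) (μp μm : MeasureTheory.Measure ℝ) (hAM : AM ρ a μp μm)
    (s : ℝ) (uN vN uD vD : ℝ → ℝ)
    (hN : IsSolution0 a μp μm uN vN) (hD : IsSolution0 a μp μm uD vD)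
    (huN : uN s = 1) (hvN : vN s = 0) (huD : uD s = 0) (hvD : vD s = 1) :
    ∀ t : ℝ, uN t * vD t - uD t * vN t = 1 := by
  have := hAM.finp.isFiniteMeasureOnCompacts
  have := hAM.finm.isFiniteMeasureOnCompacts
  intro t
  rw [hN.wronskian_eq hAM.inf_pos hAM.iInf_le hAM.meas_a hD s t, huN, hvN, huD, hvD]
  ring

/-- Constancy of the Wronskian: the determinant of the transfer matrix equals 1. -/
theorem wronskian_eq_one
    (ρ : MeasureTheory.Measure ℝ) (hρ0 : ρ ≠ 0) (hρfin : unifE ρ < ⊤)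
    (hρper : ∃ p : ℝ, IsPeriod ρ p)
    (a : ℝ → ℝ) (μp μm : MeasureTheory.Measure ℝ) (hAM : AM ρ a μp μm)
    (s : ℝ) (uN vN uD vD : ℝ → ℝ)
    (hN : IsSolution0 a μp μm uN vN) (hD : IsSolution0 a μp μm uD vD)
    (huN : uN s = 1) (hvN : vN s = 0) (huD : uD s = 0) (hvD : vD s = 1) :
    ∀ t : ℝ, uN t * vD t - uD t * vN t = 1 :=
  wronskian_eq_one_general ρ a μp μm hAM s uN vN uD vD hN hD huN hvN huD hvD
end
end

section
/- Unit-interval bound for the primitive via the Wasserstein-type seminorm: Let μ be a real local measure on ℝ with ‖μ‖_unif < ∞, and let c₀ ∈ ℝ satisfy |c₀| ≤ ‖μ‖_unif and ∫_{−1}^{1} |φ_μ(s) − c₀| ds ≤ 2 ‖μ‖_{[−1,1]}. Then for all integers α ≤ −1 and β ≥ 1 and every integer k with α ≤ k ≤ β − 1: ∫_k^{k+1} |φ_μ(s) − c₀| ds ≤ 2·max{k+1, −k}·‖μ‖_{[α,β]}. -/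
open MeasureTheory Set Filter

noncomputable section

/-!
If `h` is measurable with `|h| ≤ 1` and `∫_a^b h = 0`, where `[a, b] ⊆ I` has length at most `2`,
then the clamped primitive `x ↦ ∫_a^{clamp x} h` is an admissible test function for `‖μ‖_I`, and
Fubini turns its integral against `μ` into `-∫_a^b h (φ_μ - c)`. Choosing `h` equal to the sign of
`φ_μ - c` on one unit interval and to a constant on the adjacent one shows that
`∫_n^{n+1} |φ_μ - c|` changes by at most `‖μ‖_{[α,β]}` from one unit interval to the next, so
starting from `[-1, 1]` it grows at most linearly.
-/

lemma IntervalIntegrable.bdd_mul {f g : ℝ → ℝ} {u v C : ℝ}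
    (hf : IntervalIntegrable f volume u v) (hg : Measurable g) (hgC : ∀ s, |g s| ≤ C) :
    IntervalIntegrable (fun s => g s * f s) volume u v :=
  intervalIntegrable_iff.2 <| (intervalIntegrable_iff.1 hf).bdd_mul hg.aestronglyMeasurable
    (ae_of_all _ fun s => by simpa using hgC s)

lemma exists_measurable_abs_le_one_mul_eq_abs {α : Type*} [MeasurableSpace α] {f : α → ℝ}
    (hf : Measurable f) :
    ∃ g : α → ℝ, Measurable g ∧ (∀ x, |g x| ≤ 1) ∧ ∀ x, g x * f x = |f x| := by
  refine ⟨fun x => if 0 ≤ f x then 1 else -1,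
    Measurable.ite (measurableSet_le measurable_const hf) measurable_const measurable_const,
    fun x => by dsimp only; split_ifs <;> simp, fun x => ?_⟩
  dsimp only
  split_ifs with hx
  · rw [one_mul, abs_of_nonneg hx]
  · rw [abs_of_neg (not_le.1 hx)]; ring

lemma lipschitzWith_intervalIntegral {h : ℝ → ℝ} (hh : Measurable h) (h1 : ∀ s, |h s| ≤ 1)
    (a : ℝ) : LipschitzWith 1 fun x => ∫ s in a..x, h s := by
  have hint : ∀ u v : ℝ, IntervalIntegrable h volume u v := fun u v =>
    (intervalIntegrable_const (c := (1 : ℝ))).mono_fun' hh.aestronglyMeasurable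
      (ae_of_all _ fun s => by simpa using h1 s)
  refine LipschitzWith.of_dist_le_mul fun x y => ?_
  rw [Real.dist_eq, Real.dist_eq, intervalIntegral.integral_interval_sub_left (hint a x) (hint a y),
    NNReal.coe_one, ← Real.norm_eq_abs]
  exact intervalIntegral.norm_integral_le_of_norm_le_const fun s _ => by simpa using h1 s

lemma setIntegral_intervalIntegral_eq_setIntegral_mul_measureReal {ν : Measure ℝ} {h : ℝ → ℝ}
    {a b : ℝ} (hν : ν (Ioc a b) ≠ ⊤) (hint : IntegrableOn h (Ioc a b)) :
    ∫ x in Ioc a b, (∫ s in a..x, h s) ∂ν = ∫ s in Ioc a b, h s * ν.real (Ioc s b) := by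
  have := isFiniteMeasure_restrict.2 hν
  set F : ℝ → ℝ → ℝ := fun x s => (Iio x).indicator h s
  have hF : Integrable (Function.uncurry F)
      ((ν.restrict (Ioc a b)).prod (volume.restrict (Ioc a b))) :=
    (hint.comp_snd _).indicator (measurableSet_lt measurable_snd measurable_fst)
  have inner : ∀ x ∈ Ioc a b, ∫ s in a..x, h s = ∫ s in Ioc a b, F x s := by
    intro x hx
    have hIoo : Ioc a b ∩ Iio x = Ioo a x := by
      ext s
      simp only [mem_Ioo, mem_inter_iff, mem_Ioc, mem_Iio]
      exact ⟨fun hs => ⟨hs.1.1, hs.2⟩, fun hs => ⟨⟨hs.1, hs.2.le.trans hx.2⟩, hs.2⟩⟩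
    rw [setIntegral_indicator measurableSet_Iio, hIoo, intervalIntegral.integral_of_le hx.1.le,
      integral_Ioc_eq_integral_Ioo]
  have outer : ∀ s ∈ Ioc a b, ∫ x in Ioc a b, F x s ∂ν = h s * ν.real (Ioc s b) := by
    intro s hs
    change ∫ x in Ioc a b, (Ioi s).indicator (fun _ => h s) x ∂ν = _
    rw [setIntegral_indicator measurableSet_Ioi, Ioc_inter_Ioi, max_eq_right hs.1.le,
      setIntegral_const, smul_eq_mul, mul_comm]
  calc ∫ x in Ioc a b, (∫ s in a..x, h s) ∂ν
      = ∫ x in Ioc a b, (∫ s in Ioc a b, F x s) ∂ν := setIntegral_congr_fun measurableSet_Ioc inner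
    _ = ∫ s in Ioc a b, (∫ x in Ioc a b, F x s ∂ν) := integral_integral_swap hF
    _ = ∫ s in Ioc a b, h s * ν.real (Ioc s b) := setIntegral_congr_fun measurableSet_Ioc outer

lemma abs_sub_le_mul_of_abs_succ_sub_le {x : ℤ → ℝ} {N : ℝ} {m k : ℤ} (hmk : m ≤ k)
    (hstep : ∀ n, m ≤ n → n < k → |x (n + 1) - x n| ≤ N) : |x k - x m| ≤ (k - m) * N := by
  induction k, hmk using Int.leInduction with
  | base => simp
  | succ k hmk ih =>
    have hk := hstep k hmk (lt_add_one k)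
    have ih := ih fun n hmn hnk => hstep n hmn (hnk.trans (lt_add_one k))
    calc |x (k + 1) - x m| ≤ |x (k + 1) - x k| + |x k - x m| := abs_sub_le _ _ _
      _ ≤ N + (k - m) * N := add_le_add hk ih
      _ = ((k + 1 : ℤ) - m) * N := by push_cast; ring

lemma le_two_mul_max_mul_of_abs_succ_sub_le {x : ℤ → ℝ} {N : ℝ} {α β k : ℤ} (hN : 0 ≤ N)
    (hx : ∀ n, 0 ≤ x n) (hbase : x (-1) + x 0 ≤ 2 * N)
    (hstep : ∀ n, α ≤ n → n + 2 ≤ β → |x (n + 1) - x n| ≤ N)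
    (hα : α ≤ -1) (hβ : 1 ≤ β) (hαk : α ≤ k) (hkβ : k ≤ β - 1) :
    x k ≤ 2 * ((max (k + 1) (-k) : ℤ) : ℝ) * N := by
  rcases le_or_gt 0 k with hk | hk
  · have hgrowth := abs_le.1 <| abs_sub_le_mul_of_abs_succ_sub_le hk fun n h0n hnk =>
      hstep n (by omega) (by omega)
    have hkN : 0 ≤ (k : ℝ) * N := mul_nonneg (by exact_mod_cast hk) hN
    rw [max_eq_left (by omega)]
    push_cast at hgrowth ⊢
    linarith [hx (-1)]
  · have hgrowth := abs_le.1 <| abs_sub_le_mul_of_abs_succ_sub_le (m := k) (k := -1)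
      (by omega) fun n hkn hn => hstep n (by omega) (by omega)
    have hk' : (k : ℝ) ≤ -1 := by exact_mod_cast (by omega : k ≤ -1)
    have hkN : 0 ≤ (-1 - k : ℝ) * N := mul_nonneg (by linarith) hN
    rw [max_eq_right (by omega)]
    push_cast at hgrowth ⊢
    linarith [hx 0]

lemma FiniteOnBounded.measure_Ioc_ne_top {ν : Measure ℝ} (hν : FiniteOnBounded ν) (a b : ℝ) :
    ν (Ioc a b) ≠ ⊤ :=
  (hν _ (Metric.isBounded_Ioc a b)).ne

section Primitive

variable {μp μm : Measure ℝ}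

lemma lmVal_Ioc_add (hp : FiniteOnBounded μp) (hm : FiniteOnBounded μm) {a b c : ℝ}
    (hab : a ≤ b) (hbc : b ≤ c) :
    lmVal μp μm (Ioc a c) = lmVal μp μm (Ioc a b) + lmVal μp μm (Ioc b c) := by
  have hIoc := Ioc_union_Ioc_eq_Ioc hab hbc
  have hdisj : Disjoint (Ioc a b) (Ioc b c) := Ioc_disjoint_Ioc_of_le le_rfl
  simp only [lmVal, ← hIoc, measure_union hdisj measurableSet_Ioc]
  rw [ENNReal.toReal_add (hp.measure_Ioc_ne_top a b) (hp.measure_Ioc_ne_top b c),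
    ENNReal.toReal_add (hm.measure_Ioc_ne_top a b) (hm.measure_Ioc_ne_top b c)]
  ring

lemma phiLM_sub_phiLM (hp : FiniteOnBounded μp) (hm : FiniteOnBounded μm) {s t : ℝ}
    (hst : s ≤ t) : phiLM μp μm t - phiLM μp μm s = lmVal μp μm (Ioc s t) := by
  unfold phiLM
  rcases le_or_gt 0 s with hs | hs
  · rw [if_pos hs, if_pos (hs.trans hst), lmVal_Ioc_add hp hm hs hst]; ring
  rcases le_or_gt 0 t with ht | ht
  · rw [if_neg hs.not_ge, if_pos ht, lmVal_Ioc_add hp hm hs.le ht]; ring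
  · rw [if_neg hs.not_ge, if_neg ht.not_ge, lmVal_Ioc_add hp hm hst ht.le]; ring

lemma monotone_phiLM_zero {ν : Measure ℝ} (hν : FiniteOnBounded ν) : Monotone (phiLM ν 0) :=
  fun s t hst => sub_nonneg.1 <| by
    rw [phiLM_sub_phiLM hν (fun _ _ => by simp) hst, lmVal]
    simp

lemma phiLM_eq_sub (μp μm : Measure ℝ) : phiLM μp μm = phiLM μp 0 - phiLM μm 0 := by
  ext t
  simp only [phiLM, lmVal, Pi.sub_apply, Measure.coe_zero, Pi.zero_apply, ENNReal.toReal_zero]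
  split_ifs <;> ring

lemma measurable_phiLM (hp : FiniteOnBounded μp) (hm : FiniteOnBounded μm) :
    Measurable (phiLM μp μm) := by
  rw [phiLM_eq_sub]
  exact (monotone_phiLM_zero hp).measurable.sub (monotone_phiLM_zero hm).measurable

lemma intervalIntegrable_phiLM (hp : FiniteOnBounded μp) (hm : FiniteOnBounded μm) (a b : ℝ) :
    IntervalIntegrable (phiLM μp μm) volume a b := by
  rw [phiLM_eq_sub]
  exact (monotone_phiLM_zero hp).intervalIntegrable.sub (monotone_phiLM_zero hm).intervalIntegrable

end Primitive

section Seminorm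

variable {μp μm : Measure ℝ}

lemma abs_integral_le_of_tsupport_subset_Icc {ν : Measure ℝ} (hν : FiniteOnBounded ν)
    {w : ℝ → ℝ} (hw : LipschitzWith 1 w) {a b : ℝ} (hsupp : tsupport w ⊆ Icc a b) :
    |∫ x, w x ∂ν| ≤ (b + 1 - a) * ν.real (Icc a b) := by
  have hzero : ∀ x ∉ Icc a b, w x = 0 := fun x hx =>
    image_eq_zero_of_notMem_tsupport fun h => hx (hsupp h)
  have hbound : ∀ x ∈ Icc a b, ‖w x‖ ≤ b + 1 - a := by
    intro x hx
    have h := hw.dist_le_mul x (b + 1)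
    rw [hzero (b + 1) (by simp), Real.dist_eq, Real.dist_eq, sub_zero, NNReal.coe_one,
      one_mul] at h
    calc ‖w x‖ = |w x| := Real.norm_eq_abs _
      _ ≤ |x - (b + 1)| := h
      _ = b + 1 - x := by rw [abs_of_nonpos (by linarith [hx.2])]; ring
      _ ≤ b + 1 - a := by linarith [hx.1]
  rw [← setIntegral_eq_integral_of_forall_compl_eq_zero hzero, ← Real.norm_eq_abs]
  exact norm_setIntegral_le_of_norm_le_const (hν _ (Metric.isBounded_Icc a b)) hbound

lemma abs_lmInt_le_of_tsupport_subset_Icc (hp : FiniteOnBounded μp) (hm : FiniteOnBounded μm)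
    {w : ℝ → ℝ} (hw : LipschitzWith 1 w) {a b : ℝ} (hsupp : tsupport w ⊆ Icc a b) :
    |lmInt μp μm w| ≤ (b + 1 - a) * (μp.real (Icc a b) + μm.real (Icc a b)) := by
  rw [mul_add]
  exact (abs_sub _ _).trans <| add_le_add
    (abs_integral_le_of_tsupport_subset_Icc hp hw hsupp)
    (abs_integral_le_of_tsupport_subset_Icc hm hw hsupp)

lemma bddAbove_wNorm_set (hp : FiniteOnBounded μp) (hm : FiniteOnBounded μm) {I : Set ℝ}
    (hI : Bornology.IsBounded I) :
    BddAbove {r : ℝ | ∃ w : ℝ → ℝ, LipschitzWith 1 w ∧ HasCompactSupport w ∧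
      tsupport w ⊆ I ∧ Metric.diam (tsupport w) ≤ 2 ∧
      r = |lmInt μp μm w - lmInt 0 0 w|} := by
  refine ⟨(sSup I + 1 - sInf I) * (μp.real (Icc (sInf I) (sSup I)) +
    μm.real (Icc (sInf I) (sSup I))), ?_⟩
  rintro r ⟨w, hw, -, hsub, -, rfl⟩
  simpa [lmInt] using abs_lmInt_le_of_tsupport_subset_Icc hp hm hw
    (hsub.trans hI.subset_Icc_sInf_sSup)

lemma abs_lmInt_le_wNorm (hp : FiniteOnBounded μp) (hm : FiniteOnBounded μm) {I : Set ℝ}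
    (hI : Bornology.IsBounded I) {w : ℝ → ℝ} (hw : LipschitzWith 1 w)
    (hcs : HasCompactSupport w) (hsub : tsupport w ⊆ I) (hdiam : Metric.diam (tsupport w) ≤ 2) :
    |lmInt μp μm w| ≤ wNorm μp μm 0 0 I :=
  le_csSup (bddAbove_wNorm_set hp hm hI) ⟨w, hw, hcs, hsub, hdiam, by simp [lmInt]⟩

lemma wNorm_nonneg (hp : FiniteOnBounded μp) (hm : FiniteOnBounded μm) {I : Set ℝ}
    (hI : Bornology.IsBounded I) : 0 ≤ wNorm μp μm 0 0 I := by
  simpa [lmInt] using abs_lmInt_le_wNorm hp hm hI (LipschitzWith.const' (0 : ℝ))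
    HasCompactSupport.zero (by simp) (by simp)

lemma wNorm_mono (hp : FiniteOnBounded μp) (hm : FiniteOnBounded μm) {I J : Set ℝ}
    (hJ : Bornology.IsBounded J) (hIJ : I ⊆ J) : wNorm μp μm 0 0 I ≤ wNorm μp μm 0 0 J := by
  refine csSup_le_csSup (bddAbove_wNorm_set hp hm hJ) ?_ ?_
  · exact ⟨0, 0, LipschitzWith.const' (0 : ℝ), HasCompactSupport.zero,
      by simp, by simp, by simp [lmInt]⟩
  · rintro r ⟨w, hw, hcs, hsub, hdiam, rfl⟩
    exact ⟨w, hw, hcs, hsub.trans hIJ, hdiam, rfl⟩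

end Seminorm

def clampedPrimitive (h : ℝ → ℝ) (a b x : ℝ) : ℝ := ∫ s in a..max a (min b x), h s

section ClampedPrimitive

variable {h : ℝ → ℝ} {a b : ℝ}

lemma clampedPrimitive_of_mem {x : ℝ} (hx : x ∈ Icc a b) :
    clampedPrimitive h a b x = ∫ s in a..x, h s := by
  rw [clampedPrimitive, min_eq_right hx.2, max_eq_right hx.1]

lemma clampedPrimitive_of_notMem (h0 : ∫ s in a..b, h s = 0) {x : ℝ} (hx : x ∉ Ioc a b) :
    clampedPrimitive h a b x = 0 := by
  rcases le_or_gt x a with hxa | hax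
  · rw [clampedPrimitive, max_eq_left ((min_le_right _ _).trans hxa),
      intervalIntegral.integral_same]
  · have hbx : b < x := not_le.1 fun hxb => hx ⟨hax, hxb⟩
    rcases le_total a b with hab | hba
    · rw [clampedPrimitive, min_eq_left hbx.le, max_eq_right hab, h0]
    · rw [clampedPrimitive, min_eq_left hbx.le, max_eq_left hba, intervalIntegral.integral_same]

lemma tsupport_clampedPrimitive_subset (h0 : ∫ s in a..b, h s = 0) :
    tsupport (clampedPrimitive h a b) ⊆ Icc a b :=
  closure_minimal ((Function.support_subset_iff'.2 fun _ => clampedPrimitive_of_notMem h0).trans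
    Ioc_subset_Icc_self) isClosed_Icc

lemma lipschitzWith_clampedPrimitive (hh : Measurable h) (h1 : ∀ s, |h s| ≤ 1) :
    LipschitzWith 1 (clampedPrimitive h a b) := by
  have hlip := (lipschitzWith_intervalIntegral hh h1 a).comp
    ((LipschitzWith.id.const_min b).const_max a)
  rwa [one_mul] at hlip

lemma integral_clampedPrimitive {ν : Measure ℝ} (hν : FiniteOnBounded ν)
    (hint : IntegrableOn h (Ioc a b)) (h0 : ∫ s in a..b, h s = 0) :
    ∫ x, clampedPrimitive h a b x ∂ν = ∫ s in Ioc a b, h s * ν.real (Ioc s b) := by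
  rw [← setIntegral_eq_integral_of_forall_compl_eq_zero fun x => clampedPrimitive_of_notMem h0,
    ← setIntegral_intervalIntegral_eq_setIntegral_mul_measureReal (hν.measure_Ioc_ne_top a b) hint]
  exact setIntegral_congr_fun measurableSet_Ioc fun x hx =>
    clampedPrimitive_of_mem (Ioc_subset_Icc_self hx)

end ClampedPrimitive

section Estimates

variable {μp μm : Measure ℝ}

lemma integrableOn_mul_measureReal_Ioc {ν : Measure ℝ} (hν : FiniteOnBounded ν) {h : ℝ → ℝ}
    {a b : ℝ} (hint : IntegrableOn h (Ioc a b)) :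
    IntegrableOn (fun s => h s * ν.real (Ioc s b)) (Ioc a b) := by
  have hanti : Antitone fun s => ν.real (Ioc s b) := fun s t hst =>
    measureReal_mono (Ioc_subset_Ioc_left hst) (hν.measure_Ioc_ne_top s b)
  refine hint.mul_bdd (c := ν.real (Ioc a b)) hanti.measurable.aestronglyMeasurable
    ((ae_restrict_iff' measurableSet_Ioc).2 (ae_of_all _ fun s hs => ?_))
  rw [Real.norm_of_nonneg measureReal_nonneg]
  exact hanti hs.1.le

lemma lmInt_clampedPrimitive (hp : FiniteOnBounded μp) (hm : FiniteOnBounded μm) {h : ℝ → ℝ}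
    (hh : Measurable h) (h1 : ∀ s, |h s| ≤ 1) {a b : ℝ} (hab : a ≤ b)
    (h0 : ∫ s in a..b, h s = 0) (c : ℝ) :
    lmInt μp μm (clampedPrimitive h a b) = -∫ s in a..b, h s * (phiLM μp μm s - c) := by
  set φ := phiLM μp μm
  have hint : IntegrableOn h (Ioc a b) := by
    simpa using (intervalIntegrable_const (c := (1 : ℝ)) (a := a) (b := b)).bdd_mul hh h1 |>.1
  have hφ : IntegrableOn (fun s => h s * (φ s - c)) (Ioc a b) :=
    (((intervalIntegrable_phiLM hp hm a b).sub intervalIntegrable_const).bdd_mul hh h1).1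
  have h0' : ∫ s in Ioc a b, h s = 0 := by rwa [← intervalIntegral.integral_of_le hab]
  calc lmInt μp μm (clampedPrimitive h a b)
      = ∫ s in Ioc a b, h s * (φ b - φ s) := by
        rw [lmInt, integral_clampedPrimitive hp hint h0, integral_clampedPrimitive hm hint h0,
          ← integral_sub (integrableOn_mul_measureReal_Ioc hp hint)
            (integrableOn_mul_measureReal_Ioc hm hint)]
        refine setIntegral_congr_fun measurableSet_Ioc fun s hs => ?_
        rw [phiLM_sub_phiLM hp hm hs.2, lmVal, mul_sub, measureReal_def, measureReal_def]
    _ = ∫ s in Ioc a b, (h s * (φ b - c) - h s * (φ s - c)) := by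
        congr 1; ext s; ring
    _ = -∫ s in a..b, h s * (φ s - c) := by
        rw [integral_sub (hint.mul_const _) hφ, integral_mul_const, h0', zero_mul, zero_sub,
          intervalIntegral.integral_of_le hab]

lemma abs_integral_mul_phiLM_sub_le_wNorm (hp : FiniteOnBounded μp) (hm : FiniteOnBounded μm)
    {I : Set ℝ} (hI : Bornology.IsBounded I) {h : ℝ → ℝ} (hh : Measurable h)
    (h1 : ∀ s, |h s| ≤ 1) {a b : ℝ} (hab : a ≤ b) (hba : b - a ≤ 2) (hsub : Icc a b ⊆ I)
    (h0 : ∫ s in a..b, h s = 0) (c : ℝ) :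
    |∫ s in a..b, h s * (phiLM μp μm s - c)| ≤ wNorm μp μm 0 0 I := by
  have hsupp := tsupport_clampedPrimitive_subset h0
  rw [← abs_neg, ← lmInt_clampedPrimitive hp hm hh h1 hab h0 c]
  refine abs_lmInt_le_wNorm hp hm hI (lipschitzWith_clampedPrimitive hh h1)
    (isCompact_Icc.of_isClosed_subset (isClosed_tsupport _) hsupp) (hsupp.trans hsub) ?_
  calc Metric.diam (tsupport (clampedPrimitive h a b))
      ≤ Metric.diam (Icc a b) := Metric.diam_mono hsupp (Metric.isBounded_Icc a b)
    _ = b - a := Real.diam_Icc hab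
    _ ≤ 2 := hba

end Estimates

section Steps

variable {μp μm : Measure ℝ}

lemma abs_sub_integral_mul_phiLM_sub_le_wNorm (hp : FiniteOnBounded μp)
    (hm : FiniteOnBounded μm) {I : Set ℝ} (hI : Bornology.IsBounded I) {g₁ g₂ : ℝ → ℝ}
    (hg₁ : Measurable g₁) (hg₂ : Measurable g₂) (h₁ : ∀ s, |g₁ s| ≤ 1) (h₂ : ∀ s, |g₂ s| ≤ 1)
    {a m b : ℝ} (ham : a ≤ m) (hmb : m ≤ b) (hba : b - a ≤ 2) (hsub : Icc a b ⊆ I)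
    (heq : ∫ s in a..m, g₁ s = ∫ s in m..b, g₂ s) (c : ℝ) :
    |(∫ s in a..m, g₁ s * (phiLM μp μm s - c)) - ∫ s in m..b, g₂ s * (phiLM μp μm s - c)| ≤
      wNorm μp μm 0 0 I := by
  set h : ℝ → ℝ := fun s => if s ≤ m then g₁ s else -g₂ s
  have hh : Measurable h :=
    Measurable.ite (measurableSet_le measurable_id measurable_const) hg₁ hg₂.neg
  have h1 : ∀ s, |h s| ≤ 1 := fun s => by
    dsimp only [h]; split_ifs
    · exact h₁ s
    · rw [abs_neg]; exact h₂ s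
  have hsplit : ∀ f : ℝ → ℝ, (∀ u v, IntervalIntegrable f volume u v) →
      ∫ s in a..b, h s * f s = (∫ s in a..m, g₁ s * f s) - ∫ s in m..b, g₂ s * f s := by
    intro f hf
    have hleft : ∫ s in a..m, h s * f s = ∫ s in a..m, g₁ s * f s := by
      refine intervalIntegral.integral_congr fun s hs => ?_
      rw [uIcc_of_le ham] at hs
      simp only [h, if_pos hs.2]
    have hright : ∫ s in m..b, h s * f s = -∫ s in m..b, g₂ s * f s := by
      rw [← intervalIntegral.integral_neg]
      refine intervalIntegral.integral_congr_ae (ae_of_all _ fun s hs => ?_)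
      rw [uIoc_of_le hmb] at hs
      simp only [h, if_neg (not_le.2 hs.1), neg_mul]
    rw [← intervalIntegral.integral_add_adjacent_intervals ((hf a m).bdd_mul hh h1)
      ((hf m b).bdd_mul hh h1), hleft, hright, sub_eq_add_neg]
  have h0 : ∫ s in a..b, h s = 0 := by
    have h0 := hsplit 1 fun _ _ => intervalIntegrable_const
    simp only [Pi.one_apply, mul_one] at h0
    rw [h0, heq, sub_self]
  rw [← hsplit _ fun u v => (intervalIntegrable_phiLM hp hm u v).sub intervalIntegrable_const]
  exact abs_integral_mul_phiLM_sub_le_wNorm hp hm hI hh h1 (ham.trans hmb) hba hsub h0 c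

lemma abs_sub_integral_abs_phiLM_sub_le_wNorm (hp : FiniteOnBounded μp)
    (hm : FiniteOnBounded μm) {I : Set ℝ} (hI : Bornology.IsBounded I) {a : ℝ}
    (hsub : Icc a (a + 2) ⊆ I) (c : ℝ) :
    |(∫ s in (a + 1)..(a + 2), |phiLM μp μm s - c|) - (∫ s in a..(a + 1), |phiLM μp μm s - c|)|
      ≤ wNorm μp μm 0 0 I := by
  obtain ⟨σ, hσ, hσ1, hσφ⟩ :=
    exists_measurable_abs_le_one_mul_eq_abs ((measurable_phiLM hp hm).sub_const c)
  have habs : ∀ u : ℝ,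
      ∫ s in u..(u + 1), σ s * (phiLM μp μm s - c) = ∫ s in u..(u + 1), |phiLM μp μm s - c| :=
    fun u => intervalIntegral.integral_congr fun s _ => hσφ s
  have hconst : ∀ u T : ℝ, |T| ≤ 1 →
      |∫ s in u..(u + 1), T * (phiLM μp μm s - c)| ≤ ∫ s in u..(u + 1), |phiLM μp μm s - c| := by
    intro u T hT
    rw [intervalIntegral.integral_const_mul, abs_mul]
    exact (mul_le_of_le_one_left (abs_nonneg _) hT).trans
      (intervalIntegral.abs_integral_le_integral_abs (by linarith))
  have hσint : ∀ u : ℝ, |∫ s in u..(u + 1), σ s| ≤ 1 := fun u => by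
    simpa using intervalIntegral.norm_integral_le_of_norm_le_const (a := u) (b := u + 1)
      fun s _ => (Real.norm_eq_abs _).trans_le (hσ1 s)
  rw [show a + 2 = a + 1 + 1 by ring] at hsub ⊢
  set T₀ := ∫ s in a..(a + 1), σ s
  set T₁ := ∫ s in (a + 1)..(a + 1 + 1), σ s
  have hlen : a + 1 + 1 - a ≤ 2 := by linarith
  have hright := abs_sub_integral_mul_phiLM_sub_le_wNorm hp hm hI measurable_const hσ
    (fun _ => hσint (a + 1)) hσ1 (lt_add_one a).le (lt_add_one _).le hlen hsub (by simp) c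
  have hleft := abs_sub_integral_mul_phiLM_sub_le_wNorm hp hm hI hσ measurable_const
    hσ1 (fun _ => hσint a) (lt_add_one a).le (lt_add_one _).le hlen hsub (by simp) c
  rw [habs] at hright hleft
  have h₀ := abs_le.1 (hconst a T₁ (hσint (a + 1)))
  have h₁ := abs_le.1 (hconst (a + 1) T₀ (hσint a))
  rw [abs_sub_le_iff]
  constructor
  · linarith [abs_le.1 hright]
  · linarith [abs_le.1 hleft]

end Steps

theorem unit_interval_primitive_bound_general
    (μp μm : MeasureTheory.Measure ℝ)
    (hfinp : FiniteOnBounded μp) (hfinm : FiniteOnBounded μm)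
    (c₀ : ℝ)
    (hc₀' : (∫ s in (-1:ℝ)..1, |phiLM μp μm s - c₀|) ≤
      2 * wNorm μp μm 0 0 (Set.Icc (-1) 1)) :
    ∀ α β k : ℤ, α ≤ -1 → 1 ≤ β → α ≤ k → k ≤ β - 1 →
      (∫ s in (k : ℝ)..((k : ℝ) + 1), |phiLM μp μm s - c₀|) ≤
        2 * ((max (k + 1) (-k) : ℤ) : ℝ) * wNorm μp μm 0 0 (Set.Icc (α : ℝ) (β : ℝ)) := by
  intro α β k hα hβ hαk hkβ
  have hI : Bornology.IsBounded (Icc (α : ℝ) β) := Metric.isBounded_Icc _ _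
  have hintegrable : ∀ u v : ℝ, IntervalIntegrable (fun s => |phiLM μp μm s - c₀|) volume u v :=
    fun u v => ((intervalIntegrable_phiLM hfinp hfinm u v).sub intervalIntegrable_const).abs
  refine le_two_mul_max_mul_of_abs_succ_sub_le (x := fun n : ℤ => ∫ s in (n : ℝ)..((n : ℝ) + 1),
    |phiLM μp μm s - c₀|) (wNorm_nonneg hfinp hfinm hI)
    (fun n => intervalIntegral.integral_nonneg (by linarith) fun _ _ => abs_nonneg _)
    ?_ (fun n hαn hnβ => ?_) hα hβ hαk hkβ
  · have hαR : (α : ℝ) ≤ -1 := by exact_mod_cast hα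
    have hβR : (1 : ℝ) ≤ β := by exact_mod_cast hβ
    have hmono := wNorm_mono hfinp hfinm hI (Icc_subset_Icc hαR hβR)
    push_cast
    rw [neg_add_cancel, zero_add, intervalIntegral.integral_add_adjacent_intervals
      (hintegrable _ _) (hintegrable _ _)]
    linarith
  · have hsub : Icc (n : ℝ) (n + 2) ⊆ Icc (α : ℝ) β :=
      Icc_subset_Icc (by exact_mod_cast hαn) (by exact_mod_cast hnβ)
    have h := abs_sub_integral_abs_phiLM_sub_le_wNorm hfinp hfinm hI hsub c₀
    push_cast
    rwa [show (n : ℝ) + 2 = n + 1 + 1 by ring] at h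

/-- Unit-interval bound for the primitive via the Wasserstein-type seminorm. -/
theorem unit_interval_primitive_bound
    (μp μm : MeasureTheory.Measure ℝ)
    (hfinp : FiniteOnBounded μp) (hfinm : FiniteOnBounded μm)
    (hunif : unifE (μp + μm) < ⊤)
    (c₀ : ℝ) (hc₀ : |c₀| ≤ unifNorm (μp + μm))
    (hc₀' : (∫ s in (-1:ℝ)..1, |phiLM μp μm s - c₀|) ≤
      2 * wNorm μp μm 0 0 (Set.Icc (-1) 1)) :
    ∀ α β k : ℤ, α ≤ -1 → 1 ≤ β → α ≤ k → k ≤ β - 1 →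
      (∫ s in (k : ℝ)..((k : ℝ) + 1), |phiLM μp μm s - c₀|) ≤
        2 * ((max (k + 1) (-k) : ℤ) : ℝ) * wNorm μp μm 0 0 (Set.Icc (α : ℝ) (β : ℝ)) :=
  unit_interval_primitive_bound_general μp μm hfinp hfinm c₀ hc₀'
end
end

section
/- Lipschitz continuity of translation for the Wasserstein-type seminorm: Let μ be a real local measure on ℝ with ‖μ‖_unif < ∞ and let h ∈ ℝ with |h| ≤ 1. Then ‖μ − μ(·+h)‖_ℝ ≤ 3·|h|·‖μ‖_unif. -/
open MeasureTheory Set Filter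

noncomputable section

/-! A 1-Lipschitz `w` supported in an interval of length 2 differs from its translate by at most
`|h|`, and the difference `w - w(· - h)` lives on an interval `(t, t + 3]` when `|h| ≤ 1`. Integrating
against `|μ|` therefore costs at most `|h| · |μ|((t, t + 3]) ≤ 3 |h| ‖μ‖_unif`. -/

open Function

theorem unifE_mono {μ ν : Measure ℝ} (hμν : μ ≤ ν) : unifE μ ≤ unifE ν :=
  iSup_mono fun _ => hμν _

theorem measure_Ioc_le_mul_unifE (ν : Measure ℝ) (t : ℝ) (n : ℕ) :
    ν (Ioc t (t + n)) ≤ n * unifE ν := by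
  induction n with
  | zero => simp
  | succ n ih =>
    have hsplit : Ioc t (t + ↑(n + 1)) = Ioc t (t + n) ∪ Ioc (t + n) (t + n + 1) := by
      rw [Ioc_union_Ioc_eq_Ioc (by simp) (by simp), Nat.cast_succ, add_assoc]
    calc ν (Ioc t (t + ↑(n + 1)))
        ≤ ν (Ioc t (t + n)) + ν (Ioc (t + n) (t + n + 1)) := hsplit ▸ measure_union_le _ _
      _ ≤ n * unifE ν + unifE ν :=
        add_le_add ih (le_iSup (fun s => ν (Ioc s (s + 1))) (t + n))
      _ = ↑(n + 1) * unifE ν := by push_cast; ring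

theorem isFiniteMeasureOnCompacts_of_unifE_lt_top {ν : Measure ℝ} (hν : unifE ν < ⊤) :
    IsFiniteMeasureOnCompacts ν where
  lt_top_of_isCompact {K} hK := by
    obtain ⟨a, ha⟩ := hK.bddBelow
    obtain ⟨b, hb⟩ := hK.bddAbove
    set n := ⌈b - a + 1⌉₊
    have hKsub : K ⊆ Ioc (a - 1) (a - 1 + n) := fun x hx =>
      ⟨by linarith [ha hx], by linarith [hb hx, Nat.le_ceil (b - a + 1)]⟩
    calc ν K ≤ ν (Ioc (a - 1) (a - 1 + n)) := measure_mono hKsub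
      _ ≤ n * unifE ν := measure_Ioc_le_mul_unifE ν _ n
      _ < ⊤ := ENNReal.mul_lt_top (ENNReal.natCast_lt_top n) hν

theorem exists_support_subset_Ioc {E : Type*} [TopologicalSpace E] [T2Space E] [Zero E]
    {w : ℝ → E} (hw : Continuous w) (hcs : HasCompactSupport w) {d : ℝ}
    (hd : Metric.diam (tsupport w) ≤ d) : ∃ m, support w ⊆ Ioc m (m + d) := by
  rcases (tsupport w).eq_empty_or_nonempty with hempty | hne
  · refine ⟨0, fun x hx => ?_⟩
    simpa [hempty] using subset_tsupport w hx
  have hbdd : BddBelow (tsupport w) := hcs.bddBelow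
  set m := sInf (tsupport w)
  have hm : m ∈ tsupport w := (isClosed_tsupport w).csInf_mem hne hbdd
  have hwm : w m = 0 := by
    have hzero : EqOn w 0 (Iio m) := fun x hx =>
      image_eq_zero_of_notMem_tsupport fun hxw => (csInf_le hbdd hxw).not_gt hx
    exact hzero.closure hw continuous_const (by simp [closure_Iio])
  refine ⟨m, fun x hx => ⟨(csInf_le hbdd (subset_tsupport w hx)).lt_of_ne ?_, ?_⟩⟩
  · rintro rfl
    exact hx hwm
  · have hxm : dist x m ≤ Metric.diam (tsupport w) :=
      Metric.dist_le_diam_of_mem hcs.isBounded (subset_tsupport w hx) hm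
    rw [Real.dist_eq] at hxm
    linarith [le_abs_self (x - m)]

theorem support_sub_comp_sub_subset {G : Type*} [AddGroup G] {w : ℝ → G} {a b : ℝ}
    (hw : support w ⊆ Ioc a b) (h : ℝ) :
    support (fun x => w x - w (x - h)) ⊆ Ioc (a + min h 0) (b + max h 0) := by
  intro x hx
  rcases support_sub _ _ hx with hx | hx
  · obtain ⟨hax, hxb⟩ := hw hx
    exact ⟨by linarith [min_le_right h 0], by linarith [le_max_right h 0]⟩
  · obtain ⟨hax, hxb⟩ := hw hx
    exact ⟨by linarith [min_le_left h 0], by linarith [le_max_left h 0]⟩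

theorem integral_lmTranslate {E : Type*} [NormedAddCommGroup E] [NormedSpace ℝ E]
    (ν : Measure ℝ) (h : ℝ) (w : ℝ → E) :
    ∫ x, w x ∂lmTranslate ν h = ∫ x, w (x - h) ∂ν :=
  (measurableEmbedding_subRight h).integral_map w

theorem lmInt_sub_lmInt_lmTranslate (μp μm : Measure ℝ) [IsFiniteMeasureOnCompacts μp]
    [IsFiniteMeasureOnCompacts μm] {w : ℝ → ℝ} (hw : Continuous w) (hcs : HasCompactSupport w)
    (h : ℝ) :
    lmInt μp μm w - lmInt (lmTranslate μp h) (lmTranslate μm h) w =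
      lmInt μp μm (fun x => w x - w (x - h)) := by
  have hw' : Continuous fun x => w (x - h) := hw.comp (continuous_sub_right h)
  have hcs' : HasCompactSupport fun x => w (x - h) := hcs.comp_homeomorph (Homeomorph.subRight h)
  simp only [lmInt, integral_lmTranslate]
  rw [integral_sub (hw.integrable_of_hasCompactSupport hcs) (hw'.integrable_of_hasCompactSupport hcs'),
    integral_sub (hw.integrable_of_hasCompactSupport hcs) (hw'.integrable_of_hasCompactSupport hcs')]
  ring

theorem abs_integral_le_of_support_subset {ν : Measure ℝ} {g : ℝ → ℝ} {S : Set ℝ} {c : ℝ}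
    (hS : ν S < ⊤) (hg : support g ⊆ S) (hc : ∀ x, |g x| ≤ c) :
    |∫ x, g x ∂ν| ≤ c * ν.real S := by
  rw [← setIntegral_eq_integral_of_forall_compl_eq_zero fun x hx => notMem_support.1 (hx <| hg ·)]
  exact norm_setIntegral_le_of_norm_le_const hS fun x _ => (Real.norm_eq_abs _).trans_le (hc x)

theorem abs_lmInt_le_of_support_subset {μp μm : Measure ℝ} {g : ℝ → ℝ} {S : Set ℝ} {c : ℝ}
    (hS : (μp + μm) S < ⊤) (hg : support g ⊆ S) (hc : ∀ x, |g x| ≤ c) :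
    |lmInt μp μm g| ≤ c * (μp + μm).real S := by
  have hSp : μp S < ⊤ := (Measure.le_add_right le_rfl S).trans_lt hS
  have hSm : μm S < ⊤ := (Measure.le_add_left le_rfl S).trans_lt hS
  calc |lmInt μp μm g| ≤ |∫ x, g x ∂μp| + |∫ x, g x ∂μm| := abs_sub _ _
    _ ≤ c * μp.real S + c * μm.real S :=
      add_le_add (abs_integral_le_of_support_subset hSp hg hc)
        (abs_integral_le_of_support_subset hSm hg hc)
    _ = c * (μp + μm).real S := by
      rw [measureReal_add_apply hSp.ne hSm.ne, mul_add]

theorem translation_lipschitz_wasserstein_general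
    (μp μm : MeasureTheory.Measure ℝ)
    (hunif : unifE (μp + μm) < ⊤)
    (h : ℝ) (hh : |h| ≤ 1) :
    wNorm μp μm (lmTranslate μp h) (lmTranslate μm h) Set.univ ≤
      3 * |h| * unifNorm (μp + μm) := by
  have hfin : ∀ ν ≤ μp + μm, IsFiniteMeasureOnCompacts ν := fun ν hν =>
    isFiniteMeasureOnCompacts_of_unifE_lt_top ((unifE_mono hν).trans_lt hunif)
  have := hfin μp (Measure.le_add_right le_rfl)
  have := hfin μm (Measure.le_add_left le_rfl)
  refine Real.sSup_le ?_ (by unfold unifNorm; positivity)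
  rintro _ ⟨w, hlip, hcs, -, hdiam, rfl⟩
  obtain ⟨m, hm⟩ := exists_support_subset_Ioc hlip.continuous hcs hdiam
  set S := Ioc (m + min h 0) (m + min h 0 + 3)
  have hsupp : support (fun x => w x - w (x - h)) ⊆ S := by
    refine (support_sub_comp_sub_subset hm h).trans (Ioc_subset_Ioc le_rfl ?_)
    have hspread : max h 0 - min h 0 = |h| := by simpa using max_sub_min_eq_abs' h 0
    linarith
  have hshift : ∀ x, |w x - w (x - h)| ≤ |h| := fun x => by
    simpa [Real.dist_eq] using hlip.dist_le_mul x (x - h)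
  have hS : (μp + μm) S ≤ 3 * unifE (μp + μm) := by
    simpa using measure_Ioc_le_mul_unifE (μp + μm) (m + min h 0) 3
  have hS_top : 3 * unifE (μp + μm) ≠ ⊤ := ENNReal.mul_ne_top (by norm_num) hunif.ne
  rw [lmInt_sub_lmInt_lmTranslate μp μm hlip.continuous hcs h]
  calc _ ≤ |h| * (μp + μm).real S :=
        abs_lmInt_le_of_support_subset (hS.trans_lt hS_top.lt_top) hsupp hshift
    _ ≤ |h| * (3 * unifNorm (μp + μm)) := by
        gcongr
        simpa [unifNorm, Measure.real] using ENNReal.toReal_mono hS_top hS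
    _ = 3 * |h| * unifNorm (μp + μm) := by ring

/-- Lipschitz continuity of translation for the Wasserstein-type seminorm. -/
theorem translation_lipschitz_wasserstein
    (μp μm : MeasureTheory.Measure ℝ)
    (hfinp : FiniteOnBounded μp) (hfinm : FiniteOnBounded μm)
    (hunif : unifE (μp + μm) < ⊤)
    (h : ℝ) (hh : |h| ≤ 1) :
    wNorm μp μm (lmTranslate μp h) (lmTranslate μm h) Set.univ ≤
      3 * |h| * unifNorm (μp + μm) :=
  translation_lipschitz_wasserstein_general μp μm hunif h hh
end
end
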